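/- Let T = Σ_{i,j=1}^{n} f_{ij} dz_i ∧ dz̄_j be a closed (1,1)-current on an open set U ⊆ ℂⁿ with L¹_loc coefficients f_{ij}, and suppose f_{ij} ≡ 0 whenever (i,j) ∉ {k+1,…,n} × {k+1,…,n}. Then for all i, j ∈ {k+1,…,n} and all l ∈ {1,…,k}, the distributional derivatives ∂f_{ij}/∂z_l and ∂f_{ij}/∂z̄_l vanish. -/
import Mathlib


open MeasureTheory

/-- The Wirtinger derivative `∂φ/∂z_l = (1/2)(∂φ/∂x_l - i ∂φ/∂y_l)`. -/
noncomputable def wirtD {n : ℕ} (l : Fin n) (φ : (Fin n → ℂ) → ℂ)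
    (z : Fin n → ℂ) : ℂ :=
  (fderiv ℝ φ z (Pi.single l 1) -
    Complex.I * fderiv ℝ φ z (Pi.single l Complex.I)) / 2

/-- The conjugate Wirtinger derivative `∂φ/∂z̄_l = (1/2)(∂φ/∂x_l + i ∂φ/∂y_l)`. -/
noncomputable def wirtDBar {n : ℕ} (l : Fin n) (φ : (Fin n → ℂ) → ℂ)
    (z : Fin n → ℂ) : ℂ :=
  (fderiv ℝ φ z (Pi.single l 1) +
    Complex.I * fderiv ℝ φ z (Pi.single l Complex.I)) / 2

/-- Computational content of Lemma `pullback-lem`: if the closed (1,1)-current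
`T = Σ f_{ij} dz_i ∧ dz̄_j` with `L¹_loc` coefficients has `f_{ij} ≡ 0` unless
both `i,j` lie in the tail `{k+1,…,n}` (0-based: `k ≤ i`), then the
distributional derivatives `∂f_{ij}/∂z_l` and `∂f_{ij}/∂z̄_l` vanish for all
`l ∈ {1,…,k}` and all tail indices `i,j`.  Closedness `dT = 0` is encoded by
its componentwise distributional form `∂_l f_{ij} = ∂_i f_{lj}` and
`∂̄_l f_{ij} = ∂̄_j f_{il}` (integration against test functions `φ`). -/
theorem stmt_10 (n k : ℕ) (hk : k ≤ n) (U : Set (Fin n → ℂ)) (hU : IsOpen U)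
    (f : Fin n → Fin n → (Fin n → ℂ) → ℂ)
    (hf : ∀ i j, LocallyIntegrableOn (f i j) U)
    (hclosed : ∀ φ : (Fin n → ℂ) → ℂ, ContDiff ℝ (⊤ : ℕ∞) φ → HasCompactSupport φ →
      tsupport φ ⊆ U → ∀ i j l : Fin n,
        (∫ z, f i j z * wirtD l φ z = ∫ z, f l j z * wirtD i φ z) ∧
        (∫ z, f i j z * wirtDBar l φ z = ∫ z, f i l z * wirtDBar j φ z))
    (hvanish : ∀ i j : Fin n, ((i : ℕ) < k ∨ (j : ℕ) < k) → ∀ z, f i j z = 0) :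
    ∀ φ : (Fin n → ℂ) → ℂ, ContDiff ℝ (⊤ : ℕ∞) φ → HasCompactSupport φ →
      tsupport φ ⊆ U → ∀ i j l : Fin n, k ≤ (i : ℕ) → k ≤ (j : ℕ) → (l : ℕ) < k →
        (∫ z, f i j z * wirtD l φ z = 0) ∧ (∫ z, f i j z * wirtDBar l φ z = 0) := by
  intro φ hφ hφc hφs i j l hi hj hl
  obtain ⟨h1, h2⟩ := hclosed φ hφ hφc hφs i j l
  constructor
  · rw [h1]
    simp [hvanish l j (Or.inl hl)]
  · rw [h2]
    simp [hvanish i l (Or.inr hl)]
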